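/- If T is a tournament of order n ≥ 3 with domination number γ(T) > 1, then the watchman number satisfies w(T) = γ(T) or w(T) = γ(T) + 1. -/

import Mathlib

variable {V : Type*}

/-- `S` dominates the digraph with arc relation `A`: every vertex is in `S`
or has an in-neighbour in `S`. -/
def Dom (A : V → V → Prop) (S : Set V) : Prop :=
  ∀ v, v ∈ S ∨ ∃ u ∈ S, A u v

/-- `l` (a nonempty list of visited vertices) is a closed directed walk:
consecutive vertices are joined by arcs and there is an arc from the last
vertex back to the first (or the walk is the trivial walk at one vertex). -/
def IsClosedWalk (A : V → V → Prop) (l : List V) : Prop :=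
  l ≠ [] ∧ l.Chain' A ∧
    (l.length = 1 ∨ ∀ a b, l.head? = some a → l.getLast? = some b → A b a)

/-- The length (number of arcs, with multiplicity) of the closed walk with
vertex list `l`. -/
def walkLength (l : List V) : ℕ := if l.length = 1 then 0 else l.length

/-- `l` is a closed dominating walk. -/
def IsCDW (A : V → V → Prop) (l : List V) : Prop :=
  IsClosedWalk A l ∧ Dom A {v | v ∈ l}

/-- The digraph has a closed dominating walk. -/
def HasCDW (A : V → V → Prop) : Prop := ∃ l, IsCDW A l

/-- The watchman number: minimum length of a closed dominating walk. -/
noncomputable def watchman (A : V → V → Prop) : ℕ :=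
  sInf {n | ∃ l, IsCDW A l ∧ walkLength l = n}

/-- A tournament: loopless, and exactly one arc between any two distinct vertices. -/
def IsTournament (A : V → V → Prop) : Prop :=
  (∀ v, ¬ A v v) ∧ ∀ u v : V, u ≠ v → (A u v ↔ ¬ A v u)

/-- The subdigraph induced on `S` is strongly connected. -/
def StronglyConnectedOn (A : V → V → Prop) (S : Set V) : Prop :=
  ∀ u ∈ S, ∀ v ∈ S, Relation.ReflTransGen (fun a b => a ∈ S ∧ b ∈ S ∧ A a b) u v

/-- The maximal strongly connected component containing `v`. -/
def StrongComp (A : V → V → Prop) (v : V) : Set V :=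
  {u | Relation.ReflTransGen A v u ∧ Relation.ReflTransGen A u v}

/-- The domination number. -/
noncomputable def domNum (A : V → V → Prop) : ℕ :=
  sInf {n | ∃ S : Set V, S.ncard = n ∧ Dom A S}

/-- The total domination number. -/
noncomputable def totalDomNum (A : V → V → Prop) : ℕ :=
  sInf {n | ∃ S : Set V, S.ncard = n ∧ ∀ v, ∃ u ∈ S, u ≠ v ∧ A u v}

/-- An orientation of a complete multipartite graph whose parts are the fibres
of `P`: arcs only between different parts, and exactly one arc between any two
vertices in different parts. -/
def IsCMPOrientation {ι : Type*} (A : V → V → Prop) (P : V → ι) : Prop :=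
  (∀ u v, A u v → P u ≠ P v) ∧ ∀ u v, P u ≠ P v → (A u v ↔ ¬ A v u)

/-!
Take a minimum dominating set `S` and a Hamilton path `a → ⋯ → b` of the subtournament on `S`.
If `b → a`, the path closes up into a dominating closed walk of length `γ`; if some `u` has
`b → u → a`, detouring through `u` gives one of length `γ + 1`. Otherwise every out-neighbour of
`b` is dominated by `a` and `b` by its predecessor, so `S ∖ {b}` dominates, contradicting
minimality. Conversely a dominating closed walk visits at least `γ ≥ 2` vertices, so it is not
the trivial walk and has length at least `γ`.
-/

variable {A : V → V → Prop}

theorem List.exists_eq_cons_append_singleton {α : Type*} {l : List α} (hl : 2 ≤ l.length) :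
    ∃ a m b, l = a :: m ++ [b] := by
  obtain ⟨a, m, ha⟩ := List.exists_cons_of_ne_nil (l := l.dropLast)
    (List.ne_nil_of_length_pos (by rw [List.length_dropLast]; omega))
  exact ⟨a, m, l.getLast (List.ne_nil_of_length_pos (by omega)),
    by rw [← ha, List.dropLast_append_getLast]⟩

theorem IsTournament.adj_or_adj (hT : IsTournament A) {u v : V} (h : u ≠ v) : A u v ∨ A v u := by
  by_cases huv : A u v
  · exact .inl huv
  · exact .inr ((hT.2 v u h.symm).2 huv)

section HamiltonPath

variable [DecidableRel A]

/-- The inserted vertex lands right after a vertex it does not beat, hence one that beats it. -/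
theorem isChain_orderedInsert (htot : ∀ u v : V, u ≠ v → A u v ∨ A v u) {x : V} :
    ∀ {l : List V}, x ∉ l → l.IsChain A → (l.orderedInsert A x).IsChain A
  | [], _, _ => List.isChain_singleton x
  | a :: t, hx, hch => by
    simp only [List.mem_cons, not_or] at hx
    by_cases hxa : A x a
    · simpa [hxa] using hch
    · have hax : A a x := (htot a x (Ne.symm hx.1)).resolve_right hxa
      have ih := isChain_orderedInsert htot hx.2 hch.tail
      simp only [List.orderedInsert_cons, hxa, if_false]
      refine List.isChain_cons.2 ⟨?_, ih⟩
      cases t with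
      | nil => simpa using hax
      | cons b t' =>
        by_cases hxb : A x b
        · simpa [hxb] using hax
        · simpa [hxb] using (List.isChain_cons_cons.1 hch).1

theorem isChain_insertionSort (htot : ∀ u v : V, u ≠ v → A u v ∨ A v u) :
    ∀ {l : List V}, l.Nodup → (l.insertionSort A).IsChain A
  | [], _ => List.IsChain.nil
  | x :: t, hl => by
    rw [List.nodup_cons] at hl
    exact isChain_orderedInsert htot (fun h => hl.1 ((List.perm_insertionSort A t).mem_iff.1 h))
      (isChain_insertionSort htot hl.2)

end HamiltonPath

theorem Dom.mono {S T : Set V} (hS : Dom A S) (hST : S ⊆ T) : Dom A T := fun v =>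
  (hS v).imp (fun hv => hST hv) fun ⟨u, hu, huv⟩ => ⟨u, hST hu, huv⟩

/-- `b` is dominated by `w`, and every other vertex `b` dominates is dominated by `a`. -/
theorem Dom.diff_singleton (hT : IsTournament A) {S : Set V} {a b w : V} (hS : Dom A S)
    (ha : a ∈ S) (hw : w ∈ S) (hab : A a b) (hwb : A w b) (hno : ∀ u, A b u → ¬ A u a) :
    Dom A (S \ {b}) := by
  have hne : ∀ {x}, A x b → x ≠ b := fun h hx => hT.1 b (hx ▸ h)
  intro v
  rcases hS v with hv | ⟨u, hu, huv⟩
  · by_cases hvb : v = b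
    · exact .inr ⟨w, ⟨hw, hne hwb⟩, hvb ▸ hwb⟩
    · exact .inl ⟨hv, hvb⟩
  · by_cases hub : u = b
    · subst hub
      have hva : v ≠ a := by
        rintro rfl
        exact (hT.2 v u (hne hab)).1 hab huv
      exact .inr ⟨a, ⟨ha, hne hab⟩, (hT.adj_or_adj hva.symm).resolve_right (hno v huv)⟩
    · exact .inr ⟨u, ⟨hu, hub⟩, huv⟩

theorem domNum_le_card {s : Finset V} (hs : Dom A ↑s) : domNum A ≤ s.card :=
  Nat.sInf_le ⟨s, Set.ncard_coe_finset s, hs⟩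

theorem exists_finset_dom_card_eq_domNum (hγ : 0 < domNum A) :
    ∃ s : Finset V, s.card = domNum A ∧ Dom A ↑s := by
  obtain ⟨S, hcard, hS⟩ := Nat.sInf_mem (s := {n | ∃ S : Set V, S.ncard = n ∧ Dom A S})
    ⟨_, Set.univ, rfl, fun v => .inl trivial⟩
  obtain ⟨s, rfl⟩ := (Set.finite_of_ncard_pos (hcard.trans_gt hγ)).exists_finset_coe
  exact ⟨s, (Set.ncard_coe_finset s).symm.trans hcard, hS⟩

theorem isClosedWalk_cons_append_singleton {a b : V} {m : List V}
    (hch : (a :: m ++ [b]).IsChain A) (hba : A b a) : IsClosedWalk A (a :: m ++ [b]) := by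
  refine ⟨by simp, hch, .inr fun x y hx hy => ?_⟩
  rw [List.getLast?_concat, Option.some_inj] at hy
  rw [List.cons_append, List.head?_cons, Option.some_inj] at hx
  exact hx ▸ hy ▸ hba

theorem walkLength_of_two_le {l : List V} (hl : 2 ≤ l.length) : walkLength l = l.length :=
  if_neg (by omega)

theorem le_walkLength_of_isCDW (hγ : 1 < domNum A) {l : List V} (hl : IsCDW A l) :
    domNum A ≤ walkLength l := by
  classical
  have hlen : domNum A ≤ l.length :=
    (domNum_le_card (s := l.toFinset) (by simpa using hl.2)).trans l.toFinset_card_le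
  rwa [walkLength_of_two_le (by omega)]

theorem exists_closing_triangle (hT : IsTournament A) {a b : V} {m : List V}
    (hch : (a :: m ++ [b]).IsChain A) (hnodup : (a :: m ++ [b]).Nodup)
    (hdom : Dom A {v | v ∈ a :: m ++ [b]}) (hmin : (a :: m ++ [b]).length ≤ domNum A)
    (hba : ¬ A b a) : ∃ u, A b u ∧ A u a := by
  classical
  by_contra! htri
  have hab : A a b := (hT.adj_or_adj fun h => by simp [h] at hnodup).resolve_right hba
  have hwb : A ((a :: m).getLast (List.cons_ne_nil a m)) b := by
    simpa [List.getLast?_eq_some_getLast] using (List.isChain_append.1 hch).2.2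
  have hdel : Dom A ↑((a :: m ++ [b]).toFinset.erase b) := by
    rw [Finset.coe_erase, List.coe_toFinset]
    exact hdom.diff_singleton hT (by simp) (List.mem_append_left _ (List.getLast_mem _)) hab hwb htri
  have := domNum_le_card hdel
  rw [Finset.card_erase_of_mem (by simp), List.toFinset_card_of_nodup hnodup] at this
  simp only [List.length_append, List.length_cons] at this hmin
  omega

theorem exists_isCDW_walkLength_le (hT : IsTournament A) (hγ : 1 < domNum A) :
    ∃ l, IsCDW A l ∧ walkLength l ≤ domNum A + 1 := by
  classical
  obtain ⟨s, hcard, hs⟩ := exists_finset_dom_card_eq_domNum (A := A) (by omega)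
  obtain ⟨l, hperm, hch⟩ : ∃ l : List V, l.Perm s.toList ∧ l.IsChain A :=
    ⟨_, List.perm_insertionSort A _, isChain_insertionSort (fun _ _ => hT.adj_or_adj) s.nodup_toList⟩
  have hlen : l.length = domNum A := hperm.length_eq.trans (s.length_toList.trans hcard)
  have hdom : Dom A {v | v ∈ l} := hs.mono fun x hx => hperm.mem_iff.2 (Finset.mem_toList.2 hx)
  obtain ⟨a, m, b, rfl⟩ := List.exists_eq_cons_append_singleton (hlen ▸ hγ : 2 ≤ _)
  by_cases hba : A b a
  · refine ⟨_, ⟨isClosedWalk_cons_append_singleton hch hba, hdom⟩, ?_⟩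
    rw [walkLength_of_two_le (by omega)]
    omega
  obtain ⟨u, hbu, hua⟩ :=
    exists_closing_triangle hT hch (hperm.nodup_iff.2 s.nodup_toList) hdom hlen.le hba
  refine ⟨a :: (m ++ [b]) ++ [u], ⟨isClosedWalk_cons_append_singleton ?_ hua, hdom.mono ?_⟩, ?_⟩
  · refine hch.append (List.isChain_singleton u) fun x hx y hy => ?_
    rw [List.getLast?_concat, Option.mem_some_iff] at hx
    rw [List.head?_cons, Option.mem_some_iff] at hy
    exact hx ▸ hy ▸ hbu
  · exact fun x hx => List.mem_append_left _ hx
  · rw [walkLength_of_two_le (by simp), ← hlen]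
    simp

theorem stmt13_general (A : V → V → Prop) (hT : IsTournament A) (hγ : 1 < domNum A) :
    watchman A = domNum A ∨ watchman A = domNum A + 1 := by
  obtain ⟨l, hl, hlen⟩ := exists_isCDW_walkLength_le hT hγ
  obtain ⟨l', hl', hwatch⟩ : watchman A ∈ {n | ∃ l, IsCDW A l ∧ walkLength l = n} :=
    Nat.sInf_mem ⟨_, l, hl, rfl⟩
  have hle : watchman A ≤ walkLength l := Nat.sInf_le ⟨l, hl, rfl⟩
  have hge := le_walkLength_of_isCDW hγ hl'
  omega

theorem stmt13 [Fintype V] (A : V → V → Prop) (hT : IsTournament A)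
    (hn : 3 ≤ Fintype.card V) (hγ : 1 < domNum A) :
    watchman A = domNum A ∨ watchman A = domNum A + 1 :=
  stmt13_general A hT hγ
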